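/- arXiv:1701.05215 — 8 statements merged into one kernel-verified Lean document; each statement's English description precedes it below -/
import Mathlib

section
/- For any tree T on n ≥ 3 vertices, the distance between the center C(T) and the centroid CT(T) satisfies d(C(T), CT(T)) ≤ ⌊(n-3)/4⌋. -/
open SimpleGraph Finset

/-- Eccentricity of a vertex: max distance to any vertex. -/
noncomputable def ecc {V : Type*} [Fintype V] (G : SimpleGraph V) (v : V) : ℕ :=
  Finset.univ.sup (fun u => G.dist v u)

/-- The center: vertices of minimum eccentricity. -/
noncomputable def center {V : Type*} [Fintype V] (G : SimpleGraph V) : Set V :=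
  {v | ∀ u, ecc G v ≤ ecc G u}

/-- Total distance of a vertex. -/
noncomputable def totalDist {V : Type*} [Fintype V] (G : SimpleGraph V) (v : V) : ℕ :=
  ∑ u, G.dist v u

/-- The centroid: vertices of minimum total distance. -/
noncomputable def centroid {V : Type*} [Fintype V] (G : SimpleGraph V) : Set V :=
  {v | ∀ u, totalDist G v ≤ totalDist G u}

/-- Number of subtrees (connected induced subgraphs on nonempty vertex sets) containing `v`. -/
noncomputable def subtreeCount {V : Type*} [Fintype V] (G : SimpleGraph V) (v : V) : ℕ :=
  Nat.card {A : Finset V // v ∈ A ∧ (G.induce (A : Set V)).Connected}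

/-- The subtree core: vertices maximizing the number of containing subtrees. -/
noncomputable def core {V : Type*} [Fintype V] (G : SimpleGraph V) : Set V :=
  {v | ∀ u, subtreeCount G u ≤ subtreeCount G v}

/-- Distance between two sets of vertices. -/
noncomputable def setDist {V : Type*} (G : SimpleGraph V) (S S' : Set V) : ℕ :=
  sInf {n | ∃ u ∈ S, ∃ v ∈ S', G.dist u v = n}

/-!
Let `c ∈ C(T)` and `m ∈ CT(T)` realise `k = d(C(T), CT(T)) ≥ 1`, let `w` be the neighbour of `c`
towards `m` and `q` the neighbour of `m` towards `c`. By minimality of `k`, `w` is not central and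
`q` is not a centroid vertex. The first gives a vertex `u` with `d(c, u) = ecc(c) = r` on the
`c`-side of the edge `cw`, so `d(m, u) = k + r`. The second says that the `q`-side of the edge `qm`
is smaller than the `m`-side; it contains `u` together with the geodesic from `m` to `u`, hence at
least `k + r` vertices, and the larger `m`-side contains a vertex other than `m`, which is at
distance at least `k + 1` from `c`, so `r ≥ k + 1`. Altogether `2 (2k + 1) ≤ 2 (k + r) < n`.
-/

-- For an edge `uv` of a tree: the component containing `u` of the tree with `uv` removed.
noncomputable def closerVerts {V : Type*} [Fintype V] (G : SimpleGraph V) (u v : V) :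
    Finset V :=
  {x | G.dist u x < G.dist v x}

namespace SimpleGraph

variable {V : Type*} {G : SimpleGraph V} {a b c m q u v w x y : V}

lemma Walk.dist_add_dist_of_mem_support [DecidableEq V] (p : G.Walk a b)
    (hp : p.length = G.dist a b) (hx : x ∈ p.support) :
    G.dist a x + G.dist x b = G.dist a b := by
  rw [← length_eq_dist_of_subwalk hp (p.isSubwalk_takeUntil hx),
    ← length_eq_dist_of_subwalk hp (p.isSubwalk_dropUntil hx), ← hp,
    ← Walk.length_append, p.take_spec hx]

lemma Connected.exists_dist_eq_of_le (hconn : G.Connected) (a b : V) {j : ℕ}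
    (hj : j ≤ G.dist a b) : ∃ x, G.dist a x = j ∧ G.dist x b = G.dist a b - j := by
  obtain ⟨p, hp⟩ := hconn.exists_walk_length_eq_dist a b
  refine ⟨p.getVert j, ?_, ?_⟩
  · rw [← length_eq_dist_of_subwalk hp (p.isSubwalk_take j), Walk.take_length]
    omega
  · rw [← length_eq_dist_of_subwalk hp (p.isSubwalk_drop j), Walk.drop_length, hp]

lemma IsTree.dist_eq_dist_add_one_of_adj' (hT : G.IsTree) (h : G.Adj c w) (x : V) :
    G.dist w x = G.dist c x + 1 ∨ G.dist c x = G.dist w x + 1 := by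
  rw [dist_comm (u := w), dist_comm (u := c)]
  exact hT.dist_eq_dist_add_one_of_adj x h.symm

lemma IsTree.dist_eq_of_adj_of_lt_of_lt (hT : G.IsTree) (h : G.Adj c w)
    (hx : G.dist c x < G.dist w x) (hy : G.dist w y < G.dist c y) :
    G.dist x y = G.dist x c + 1 + G.dist w y := by
  classical
  have hconn := hT.connected
  have : G.dist c w = 1 := dist_eq_one_iff_adj.mpr h
  have : G.dist w c = 1 := dist_eq_one_iff_adj.mpr h.symm
  have : G.dist w x ≤ G.dist w c + G.dist c x := hconn.dist_triangle
  have : G.dist c y ≤ G.dist c w + G.dist w y := hconn.dist_triangle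
  have : G.dist x c = G.dist c x := dist_comm
  have : G.dist y c = G.dist c y := dist_comm
  have : G.dist y w = G.dist w y := dist_comm
  obtain ⟨α, hα⟩ := hconn.exists_walk_length_eq_dist c x
  obtain ⟨p, hp⟩ := hconn.exists_walk_length_eq_dist x y
  obtain ⟨β, hβ⟩ := hconn.exists_walk_length_eq_dist y w
  have hmem := isBridge_iff_forall_walk_mem_edges.mp
    (isAcyclic_iff_forall_adj_isBridge.mp hT.isAcyclic h) (α.append (p.append β))
  simp only [Walk.edges_append, List.mem_append] at hmem
  rcases hmem with hm | hm | hm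
  · have := α.dist_add_dist_of_mem_support hα (α.snd_mem_support_of_mem_edges hm)
    omega
  · have := p.dist_add_dist_of_mem_support hp (p.fst_mem_support_of_mem_edges hm)
    omega
  · have := β.dist_add_dist_of_mem_support hβ (β.fst_mem_support_of_mem_edges hm)
    omega

variable [Fintype V]

lemma Connected.exists_dist_eq_ecc_and_lt_of_ecc_lt (hconn : G.Connected) (h : G.Adj c w)
    (hecc : ecc G c < ecc G w) : ∃ u, G.dist c u = ecc G c ∧ G.dist c u < G.dist w u := by
  by_contra! hno
  refine hecc.not_ge (Finset.sup_le fun x _ => ?_)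
  have hle : G.dist c x ≤ ecc G c := le_sup (mem_univ x)
  have : G.dist w x ≤ G.dist w c + G.dist c x := hconn.dist_triangle
  have : G.dist w c = 1 := dist_eq_one_iff_adj.mpr h.symm
  by_cases hx : G.dist c x = ecc G c
  · exact (hno x hx).trans hle
  · omega


lemma IsTree.card_closerVerts_add_card_closerVerts (hT : G.IsTree) (h : G.Adj u v) :
    #(closerVerts G u v) + #(closerVerts G v u) = Fintype.card V := by
  have hside : closerVerts G v u = univ.filter fun x => ¬ G.dist u x < G.dist v x := by
    refine filter_congr fun x _ => ?_
    have := hT.dist_eq_dist_add_one_of_adj' h x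
    omega
  rw [hside, closerVerts, card_filter_add_card_filter_not, card_univ]

lemma IsTree.totalDist_add_card_closerVerts (hT : G.IsTree) (h : G.Adj m q) :
    totalDist G q + #(closerVerts G q m) = totalDist G m + #(closerVerts G m q) := by
  simp only [totalDist, closerVerts, card_filter, ← sum_add_distrib]
  refine sum_congr rfl fun x _ => ?_
  rcases hT.dist_eq_dist_add_one_of_adj' h x with hx | hx <;> simp [hx]

lemma IsTree.dist_le_card_closerVerts (hT : G.IsTree) (h : G.Adj m q)
    (hx : G.dist q x < G.dist m x) : G.dist m x ≤ #(closerVerts G q m) := by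
  have hsurj : Set.SurjOn (G.dist m) (closerVerts G q m) (Icc 1 (G.dist m x)) := by
    intro j hj
    simp only [coe_Icc, Set.mem_Icc] at hj
    obtain ⟨y, hmy, hyx⟩ := hT.connected.exists_dist_eq_of_le m x hj.2
    refine ⟨y, ?_, hmy⟩
    simp only [closerVerts, coe_filter, mem_univ, true_and, Set.mem_ofPred_eq]
    by_contra hy
    have := hT.dist_eq_dist_add_one_of_adj' h y
    have := hT.dist_eq_of_adj_of_lt_of_lt h (x := y) (y := x) (by omega) hx
    have : G.dist y m = G.dist m y := dist_comm
    have := hT.dist_eq_dist_add_one_of_adj' h x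
    omega
  simpa using card_le_card_of_surjOn _ hsurj

lemma IsTree.card_closerVerts_lt_of_totalDist_lt (hT : G.IsTree) (h : G.Adj m q)
    (htd : totalDist G m < totalDist G q) : #(closerVerts G q m) < #(closerVerts G m q) := by
  have := hT.totalDist_add_card_closerVerts h
  omega

lemma IsTree.dist_lt_ecc_of_totalDist_lt (hT : G.IsTree) (h : G.Adj q m)
    (htd : totalDist G m < totalDist G q) (hx : G.dist q x < G.dist m x) :
    G.dist x m < ecc G x := by
  have hxq : x ∈ closerVerts G q m := by simpa [closerVerts] using hx
  have hcard : 1 < #(closerVerts G m q) := by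
    have := card_pos.mpr ⟨x, hxq⟩
    have := hT.card_closerVerts_lt_of_totalDist_lt h.symm htd
    omega
  obtain ⟨y, hy, hym⟩ := exists_mem_ne hcard m
  have hmy : G.dist m y < G.dist q y := by simpa [closerVerts] using hy
  have := hT.dist_eq_of_adj_of_lt_of_lt h hx hmy
  have : 0 < G.dist m y := hT.connected.pos_dist_of_ne hym.symm
  have : G.dist x y ≤ ecc G x := le_sup (mem_univ y)
  have : G.dist x m ≤ G.dist x q + G.dist q m := hT.connected.dist_triangle
  have : G.dist q m = 1 := dist_eq_one_iff_adj.mpr h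
  omega

lemma IsTree.four_mul_dist_add_three_le_card (hT : G.IsTree) (hc : c ∈ _root_.center G)
    (hm : m ∈ centroid G)
    (hmin : ∀ c' ∈ _root_.center G, ∀ m' ∈ centroid G, G.dist c m ≤ G.dist c' m')
    (hpos : 0 < G.dist c m) : 4 * G.dist c m + 3 ≤ Fintype.card V := by
  have hconn := hT.connected
  obtain ⟨w, hcw, hwm⟩ := hconn.exists_dist_eq_of_le c m (j := 1) hpos
  obtain ⟨q, hcq, hqm⟩ := hconn.exists_dist_eq_of_le c m (j := G.dist c m - 1) (by omega)
  have hw : G.Adj c w := dist_eq_one_iff_adj.mp hcw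
  have hq : G.Adj q m := dist_eq_one_iff_adj.mp (by omega)
  have hecc : ecc G c < ecc G w := by
    by_contra! hle
    have := hmin w (fun u => hle.trans (hc u)) m hm
    omega
  have htd : totalDist G m < totalDist G q := by
    by_contra! hle
    have := hmin c hc q (fun u => hle.trans (hm u))
    omega
  obtain ⟨u, hcu, hu⟩ := hconn.exists_dist_eq_ecc_and_lt_of_ecc_lt hw hecc
  have hmu : G.dist m u = G.dist c m + ecc G c := by
    have := hT.dist_eq_of_adj_of_lt_of_lt hw hu (x := u) (y := m) (by omega)
    rw [dist_comm, dist_comm (u := u)] at this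
    omega
  have hmc : G.dist m c = G.dist c m := dist_comm
  have hqc : G.dist q c = G.dist c q := dist_comm
  have hqu : G.dist q u < G.dist m u := by
    rcases hT.dist_eq_dist_add_one_of_adj' hq u with h | h
    · omega
    have := hT.dist_eq_of_adj_of_lt_of_lt hq (x := c) (y := u) (by omega) (by omega)
    omega
  have := hT.dist_le_card_closerVerts hq.symm hqu
  have := hT.dist_lt_ecc_of_totalDist_lt hq htd (x := c) (by omega)
  have := hT.card_closerVerts_lt_of_totalDist_lt hq.symm htd
  have := hT.card_closerVerts_add_card_closerVerts hq
  omega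

end SimpleGraph

lemma setDist_le_dist {V : Type*} {G : SimpleGraph V} {S S' : Set V} {u v : V} (hu : u ∈ S)
    (hv : v ∈ S') : setDist G S S' ≤ G.dist u v :=
  Nat.sInf_le ⟨u, hu, v, hv, rfl⟩

lemma exists_dist_eq_setDist {V : Type*} {G : SimpleGraph V} {S S' : Set V} (hS : S.Nonempty)
    (hS' : S'.Nonempty) : ∃ u ∈ S, ∃ v ∈ S', G.dist u v = setDist G S S' := by
  obtain ⟨u, hu⟩ := hS
  obtain ⟨v, hv⟩ := hS'
  exact Nat.sInf_mem (show {n | ∃ u ∈ S, ∃ v ∈ S', G.dist u v = n}.Nonempty from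
    ⟨_, u, hu, v, hv, rfl⟩)

lemma center_nonempty {V : Type*} [Fintype V] [Nonempty V] (G : SimpleGraph V) :
    (_root_.center G).Nonempty :=
  Finite.exists_min (ecc G)

lemma centroid_nonempty {V : Type*} [Fintype V] [Nonempty V] (G : SimpleGraph V) :
    (centroid G).Nonempty :=
  Finite.exists_min (totalDist G)

/-- For any tree `T` on `n ≥ 3` vertices,
`d(C(T), CT(T)) ≤ ⌊(n-3)/4⌋`. -/
theorem center_centroid_dist_le {V : Type*} [Fintype V] (G : SimpleGraph V)
    (hT : G.IsTree) (n : ℕ) (hn : n = Fintype.card V) (h3 : 3 ≤ n) :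
    setDist G (_root_.center G) (centroid G) ≤ (n - 3) / 4 := by
  have : Nonempty V := Fintype.card_pos_iff.mp (by omega)
  obtain ⟨c, hc, m, hm, hcm⟩ := exists_dist_eq_setDist (G := G) (center_nonempty G)
    (centroid_nonempty G)
  rw [← hcm, Nat.le_div_iff_mul_le four_pos]
  rcases (G.dist c m).eq_zero_or_pos with h0 | hpos
  · omega
  have := hT.four_mul_dist_add_three_le_card hc hm
    (fun c' hc' m' hm' => hcm ▸ setDist_le_dist hc' hm') hpos
  omega
end

section
/- Among all rooted trees of order n, the number of subtrees containing the root is at most 2^(n-1), with equality if and only if the tree is a star rooted at its center. -/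
open SimpleGraph Finset

/-!
A vertex set containing the root `r` is determined by its other vertices, so at most
`2 ^ (n - 1)` sets can be subtrees containing `r`. All of them are subtrees exactly when every
pair `{r, v}` is, i.e. when `r` is adjacent to every other vertex: a set containing such an `r`
is connected through `r`.
-/

lemma Finset.card_filter_mem_eq_two_pow {α : Type*} [Fintype α] [DecidableEq α] (a : α) :
    #{s : Finset α | a ∈ s} = 2 ^ (Fintype.card α - 1) :=
  calc #{s : Finset α | a ∈ s}
      = #(univ.erase a).powerset := by
        refine card_nbij' (·.erase a) (insert a) ?_ ?_ ?_ ?_ <;> intro s hs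
        · simp
        · simp
        · exact insert_erase (mem_filter.1 hs).2
        · exact erase_insert fun ha => (mem_erase.1 (mem_powerset.1 hs ha)).1 rfl
    _ = 2 ^ (Fintype.card α - 1) := by
        rw [card_powerset, card_erase_of_mem (mem_univ a), card_univ]

namespace SimpleGraph

variable {V : Type*} {G : SimpleGraph V}

lemma induce_pair_connected_iff {u v : V} (huv : u ≠ v) :
    (G.induce {u, v}).Connected ↔ G.Adj u v := by
  refine ⟨fun h => ?_, induce_pair_connected_of_adj⟩
  obtain ⟨w⟩ := h ⟨u, by simp⟩ ⟨v, by simp⟩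
  have hsnd : G.Adj u w.snd := w.adj_snd (w.not_nil_of_ne (by simpa using huv))
  rcases w.snd.2 with hu | hv
  · exact (G.ne_of_adj hsnd hu.symm).elim
  · rwa [hv] at hsnd

lemma induce_connected_of_forall_adj {s : Set V} {r : V} (hr : r ∈ s)
    (hadj : ∀ v ∈ s, v ≠ r → G.Adj r v) : (G.induce s).Connected := by
  refine G.induce_connected_of_patches r hr fun {v} hv => ⟨{r, v}, ?_, by simp, by simp, ?_⟩
  · simp [Set.insert_subset_iff, hr, hv]
  · rcases eq_or_ne v r with rfl | hvr
    · rfl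
    · exact ((induce_pair_connected_iff hvr.symm).2 (hadj v hv hvr)).preconnected _ _

lemma forall_induce_connected_iff_forall_adj (r : V) :
    (∀ A : Finset V, r ∈ A → (G.induce (A : Set V)).Connected) ↔ ∀ v, v ≠ r → G.Adj r v := by
  classical
  refine ⟨fun h v hvr => ?_, fun h A hr => induce_connected_of_forall_adj hr fun v _ => h v⟩
  rw [← induce_pair_connected_iff hvr.symm]
  have hpair := h {r, v} (by simp)
  rw [Finset.coe_pair] at hpair
  exact hpair

end SimpleGraph

open scoped Classical in
lemma subtreeCount_eq_card_filter {V : Type*} [Fintype V] (G : SimpleGraph V) (v : V) :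
    subtreeCount G v = #{A : Finset V | v ∈ A ∧ (G.induce (A : Set V)).Connected} := by
  rw [subtreeCount, Nat.card_eq_fintype_card, Fintype.card_subtype]

theorem subtreeCount_root_le_two_pow_general {V : Type*} [Fintype V] (G : SimpleGraph V)
    (r : V) (n : ℕ) (hn : n = Fintype.card V) :
    subtreeCount G r ≤ 2 ^ (n - 1) ∧
      (subtreeCount G r = 2 ^ (n - 1) ↔ ∀ v, v ≠ r → G.Adj r v) := by
  classical
  subst hn
  rw [subtreeCount_eq_card_filter, ← Finset.card_filter_mem_eq_two_pow r, ← filter_filter,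
    card_filter_eq_iff, ← G.forall_induce_connected_iff_forall_adj]
  exact ⟨card_filter_le _ _, by simp⟩

/-- Among rooted trees of order `n`, the number of root-containing
subtrees is at most `2^(n-1)`, with equality iff the tree is a star rooted at its center. -/
theorem subtreeCount_root_le_two_pow {V : Type*} [Fintype V] (G : SimpleGraph V)
    (hT : G.IsTree) (r : V) (n : ℕ) (hn : n = Fintype.card V) :
    subtreeCount G r ≤ 2 ^ (n - 1) ∧
      (subtreeCount G r = 2 ^ (n - 1) ↔ ∀ v, v ≠ r → G.Adj r v) :=
  subtreeCount_root_le_two_pow_general G r n hn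
end

section
/- Among all rooted trees of order n, the number of subtrees containing the root is at least n, with equality if and only if the tree is a path rooted at one of its end vertices. -/
open SimpleGraph Finset

/-!
Sending `u` to the vertex set of the path from `r` to `u` injects the vertices into the subtrees
containing `r`, as `u` is the vertex of its path farthest from `r`. In a tree, a connected vertex
set contains the path between any two of its vertices, and the vertices of a path from `r` are
separated by their distance to `r`. If all degrees are at most 2 and `r` has degree at most 1,
paths from `r` cannot branch, so a subtree containing `r` is the path to its farthest vertex.
Conversely, if every such subtree is a path from `r`, then so is the path from `r` to `v`
together with all neighbours of `v`; the neighbours of `v` lie at distance `d(r, v) ± 1` from `r`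
(those of `r` at distance 1), so there are at most two of them (at most one for `v = r`).
-/

namespace SimpleGraph

variable {V : Type*} {G : SimpleGraph V}

theorem IsAcyclic.length_eq_dist (hG : G.IsAcyclic) {u v : V} {p : G.Walk u v}
    (hp : p.IsPath) : p.length = G.dist u v := by
  obtain ⟨q, hq, hlen⟩ := p.reachable.exists_path_of_dist
  obtain rfl : p = q := congrArg Subtype.val ((hG.subsingleton_path u v).elim ⟨p, hp⟩ ⟨q, hq⟩)
  exact hlen

theorem IsAcyclic.getVert_dist_eq (hG : G.IsAcyclic) {u v w : V} {p : G.Walk u v}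
    (hp : p.IsPath) (hw : w ∈ p.support) : p.getVert (G.dist u w) = w := by
  classical
  rw [← hG.length_eq_dist (hp.takeUntil hw), p.getVert_length_takeUntil hw]

theorem IsAcyclic.injOn_dist_support (hG : G.IsAcyclic) {u v : V} {p : G.Walk u v}
    (hp : p.IsPath) : Set.InjOn (G.dist u) {w | w ∈ p.support} := fun a ha b hb hab => by
  rw [← hG.getVert_dist_eq hp ha, hab, hG.getVert_dist_eq hp hb]

theorem IsAcyclic.dist_le_of_mem_support (hG : G.IsAcyclic) {u v w : V} {p : G.Walk u v}
    (hp : p.IsPath) (hw : w ∈ p.support) : G.dist u w ≤ G.dist u v := by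
  classical
  calc G.dist u w ≤ (p.takeUntil w hw).length := dist_le _
    _ ≤ p.length := p.length_takeUntil_le_length hw
    _ = G.dist u v := hG.length_eq_dist hp

theorem IsAcyclic.eq_of_mem_support_of_dist_le (hG : G.IsAcyclic) {u v w : V}
    {p : G.Walk u v} (hp : p.IsPath) (hw : w ∈ p.support) (hdist : G.dist u v ≤ G.dist u w) :
    w = v := by
  rw [← hG.getVert_dist_eq hp hw, p.getVert_of_length_le (hG.length_eq_dist hp ▸ hdist)]

theorem IsAcyclic.support_subset_of_connected_induce (hG : G.IsAcyclic) {s : Set V}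
    (hs : (G.induce s).Connected) {u v : V} {p : G.Walk u v} (hp : p.IsPath) (hu : u ∈ s)
    (hv : v ∈ s) : {w | w ∈ p.support} ⊆ s := by
  classical
  obtain ⟨q⟩ := hs.preconnected ⟨u, hu⟩ ⟨v, hv⟩
  let q' := q.map (Embedding.induce s).toHom
  have hq' : {w | w ∈ q'.support} ⊆ s := by
    rintro _ hw
    obtain ⟨⟨w, hws⟩, -, rfl⟩ := List.mem_map.1 ((Walk.support_map _ _) ▸ hw)
    exact hws
  have hpq : p = q'.bypass :=
    congrArg Subtype.val ((hG.subsingleton_path u v).elim ⟨p, hp⟩ ⟨_, q'.bypass_isPath⟩)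
  exact fun w hw => hq' (q'.support_bypass_subset_support (hpq ▸ hw))

theorem IsTree.ncard_neighborSet_le_two_of_subset_support (hG : G.IsTree) {u v w : V}
    {p : G.Walk u w} (hp : p.IsPath) (hN : G.neighborSet v ⊆ {x | x ∈ p.support}) :
    (G.neighborSet v).ncard ≤ 2 := by
  calc (G.neighborSet v).ncard ≤ ({G.dist u v - 1, G.dist u v + 1} : Set ℕ).ncard := by
        refine Set.ncard_le_ncard_of_injOn (G.dist u) (fun x hx => ?_)
          ((hG.isAcyclic.injOn_dist_support hp).mono hN)
        rcases hG.dist_eq_dist_add_one_of_adj u hx with h | h <;> simp [h]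
    _ ≤ 2 := (Set.ncard_insert_le _ _).trans (by simp)

theorem IsTree.ncard_neighborSet_start_le_one_of_subset_support (hG : G.IsTree) {u w : V}
    {p : G.Walk u w} (hp : p.IsPath) (hN : G.neighborSet u ⊆ {x | x ∈ p.support}) :
    (G.neighborSet u).ncard ≤ 1 := by
  calc (G.neighborSet u).ncard ≤ ({1} : Set ℕ).ncard :=
        Set.ncard_le_ncard_of_injOn (G.dist u) (fun x hx => dist_eq_one_iff_adj.2 hx)
          ((hG.isAcyclic.injOn_dist_support hp).mono hN)
    _ = 1 := Set.ncard_singleton 1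

-- `Finite V` is needed because `Set.ncard` is `0` on infinite sets.
theorem Walk.mem_support_or_mem_support_of_snd_eq [Finite V]
    (hdeg : ∀ v, (G.neighborSet v).ncard ≤ 2) {w x u : V} (p : G.Walk w x) (q : G.Walk w u)
    (hp : p.IsPath) (hq : q.IsPath) (hsnd : ¬p.Nil → ¬q.Nil → p.snd = q.snd) :
    x ∈ q.support ∨ u ∈ p.support := by
  induction p generalizing u with
  | nil => exact Or.inl q.start_mem_support
  | @cons w y x h p ih =>
    cases q with
    | nil => exact Or.inr (Walk.cons h p).start_mem_support
    | cons h' q =>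
      obtain rfl : y = _ := by simpa using hsnd Walk.not_nil_cons Walk.not_nil_cons
      rw [Walk.cons_isPath_iff] at hp hq
      have hsnd' : ¬p.Nil → ¬q.Nil → p.snd = q.snd := fun hpn hqn => by
        by_contra hne
        have h3 : 2 < (G.neighborSet y).ncard := (Set.two_lt_ncard_iff).2
          ⟨w, p.snd, q.snd, h.symm, p.adj_snd hpn, q.adj_snd hqn,
            fun hw => hp.2 (hw ▸ p.getVert_mem_support 1),
            fun hw => hq.2 (hw ▸ q.getVert_mem_support 1), hne⟩
        exact absurd (hdeg y) (by omega)
      rcases ih q hp.1 hq.1 hsnd' with hmem | hmem <;> simp [hmem]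

theorem connected_induce_of_forall_mem_support {s : Set V} {u : V} (hu : u ∈ s)
    (h : ∀ v ∈ s, ∃ (x : V) (p : G.Walk u x), v ∈ p.support ∧ {w | w ∈ p.support} ⊆ s) :
    (G.induce s).Connected :=
  induce_connected_of_patches u hu fun hv =>
    let ⟨_, p, hvp, hps⟩ := h _ hv
    ⟨_, hps, p.start_mem_support, hvp, p.connected_induce_support.preconnected _ _⟩

noncomputable def IsTree.path (hG : G.IsTree) (u v : V) : G.Path u v :=
  ⟨_, (hG.existsUnique_path u v).exists.choose_spec⟩

abbrev RootedSubtree (G : SimpleGraph V) (r : V) : Type _ :=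
  {A : Finset V // r ∈ A ∧ (G.induce (A : Set V)).Connected}

theorem subtreeCount_eq_card_rootedSubtree [Fintype V] (G : SimpleGraph V) (r : V) :
    subtreeCount G r = Nat.card (G.RootedSubtree r) :=
  rfl

noncomputable def IsTree.pathSubtree [DecidableEq V] (hG : G.IsTree) (r u : V) :
    G.RootedSubtree r :=
  ⟨(hG.path r u).1.support.toFinset, by simp,
    by rw [List.coe_toFinset]; exact (hG.path r u).1.connected_induce_support⟩

section Rooted

variable [DecidableEq V] (hG : G.IsTree) (r : V)

theorem IsTree.mem_pathSubtree {u w : V} :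
    w ∈ (hG.pathSubtree r u).1 ↔ w ∈ (hG.path r u).1.support :=
  List.mem_toFinset

theorem IsTree.pathSubtree_injective : Function.Injective (hG.pathSubtree r) := by
  intro u v huv
  have hu : u ∈ (hG.path r v).1.support :=
    (hG.mem_pathSubtree r).1 (huv ▸ (hG.mem_pathSubtree r).2 (Walk.end_mem_support _))
  have hv : v ∈ (hG.path r u).1.support :=
    (hG.mem_pathSubtree r).1 (huv ▸ (hG.mem_pathSubtree r).2 (Walk.end_mem_support _))
  exact hG.isAcyclic.eq_of_mem_support_of_dist_le (hG.path r v).2 hu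
    (hG.isAcyclic.dist_le_of_mem_support (hG.path r u).2 hv)

/-- A rooted subtree is the path from `r` to its vertex farthest from `r`. -/
theorem IsTree.pathSubtree_surjective [Finite V] (hdeg : ∀ v, (G.neighborSet v).ncard ≤ 2)
    (hr : (G.neighborSet r).ncard ≤ 1) : Function.Surjective (hG.pathSubtree r) := by
  rintro ⟨A, hrA, hA⟩
  obtain ⟨u, huA, hfar⟩ := A.exists_max_image (G.dist r) ⟨r, hrA⟩
  refine ⟨u, Subtype.ext (Finset.ext fun x => ?_)⟩
  rw [hG.mem_pathSubtree]
  refine ⟨fun hx => hG.isAcyclic.support_subset_of_connected_induce hA (hG.path r u).2 hrA huA hx,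
    fun hx => ?_⟩
  have hsnd : ¬(hG.path r x).1.Nil → ¬(hG.path r u).1.Nil →
      (hG.path r x).1.snd = (hG.path r u).1.snd := fun hxn hun =>
    (Set.ncard_le_one (Set.toFinite _)).1 hr _ (Walk.adj_snd hxn) _ (Walk.adj_snd hun)
  rcases Walk.mem_support_or_mem_support_of_snd_eq hdeg _ _ (hG.path r x).2 (hG.path r u).2
    hsnd with hxu | hux
  · exact hxu
  · rw [hG.isAcyclic.eq_of_mem_support_of_dist_le (hG.path r x).2 hux (hfar x hx)]
    exact Walk.end_mem_support _

/-- Apply surjectivity to the path from `r` to `v` extended by all edges at `v`. -/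
theorem IsTree.exists_neighborSet_subset_support_of_pathSubtree_surjective [Finite V]
    (hs : Function.Surjective (hG.pathSubtree r)) (v : V) :
    ∃ u, G.neighborSet v ⊆ {w | w ∈ (hG.path r u).1.support} := by
  set p := (hG.path r v).1
  set A := p.support.toFinset ∪ (Set.toFinite (G.neighborSet v)).toFinset
  have hA : (G.induce (A : Set V)).Connected := by
    refine connected_induce_of_forall_mem_support (u := r) (by simp [A]) fun w hw => ?_
    have hpA : {x | x ∈ p.support} ⊆ A := fun x hx => by simp [A, hx]
    rcases Finset.mem_union.1 hw with hwp | hwv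
    · exact ⟨v, p, List.mem_toFinset.1 hwp, hpA⟩
    · have hvw : G.Adj v w := by simpa using hwv
      refine ⟨w, p.concat hvw, by simp [Walk.support_concat], fun x hx => ?_⟩
      rcases List.mem_append.1 ((Walk.support_concat _ _) ▸ hx) with hxp | hxw
      · exact hpA hxp
      · rw [List.mem_singleton.1 hxw]
        simp [A, hvw]
  obtain ⟨u, hu⟩ := hs ⟨A, by simp [A], hA⟩
  refine ⟨u, fun w hw => (hG.mem_pathSubtree r).1 ?_⟩
  rw [hu]
  simp [A, hw]

theorem IsTree.pathSubtree_surjective_iff [Finite V] : Function.Surjective (hG.pathSubtree r) ↔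
    (∀ v, (G.neighborSet v).ncard ≤ 2) ∧ (G.neighborSet r).ncard ≤ 1 := by
  refine ⟨fun hs => ⟨fun v => ?_, ?_⟩, fun h => hG.pathSubtree_surjective r h.1 h.2⟩
  · obtain ⟨u, hu⟩ := hG.exists_neighborSet_subset_support_of_pathSubtree_surjective r hs v
    exact hG.ncard_neighborSet_le_two_of_subset_support (hG.path r u).2 hu
  · obtain ⟨u, hu⟩ := hG.exists_neighborSet_subset_support_of_pathSubtree_surjective r hs r
    exact hG.ncard_neighborSet_start_le_one_of_subset_support (hG.path r u).2 hu

end Rooted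

end SimpleGraph

/-- Among rooted trees of order `n`, the number of root-containing
subtrees is at least `n`, with equality iff the tree is a path rooted at an end vertex. -/
theorem subtreeCount_root_ge_card {V : Type*} [Fintype V] (G : SimpleGraph V)
    (hT : G.IsTree) (r : V) (n : ℕ) (hn : n = Fintype.card V) :
    n ≤ subtreeCount G r ∧
      (subtreeCount G r = n ↔
        ((∀ v, (G.neighborSet v).ncard ≤ 2) ∧ (G.neighborSet r).ncard ≤ 1)) := by
  classical
  have hinj := hT.pathSubtree_injective r
  rw [subtreeCount_eq_card_rootedSubtree, hn, ← Nat.card_eq_fintype_card,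
    ← hT.pathSubtree_surjective_iff r]
  refine ⟨Nat.card_le_card_of_injective _ hinj, fun hcard => ?_, fun hs => ?_⟩
  · exact ((Nat.bijective_iff_injective_and_card _).2 ⟨hinj, hcard.symm⟩).2
  · exact (Nat.card_eq_of_bijective _ ⟨hinj, hs⟩).symm
end

section
/- In a tree T, a vertex u belongs to the subtree core Core(T) if and only if for every neighbor v of u, F_{T−uv}(u) ≥ F_{T−uv}(v), where F_{T−uv}(x) counts the subtrees of the component of the forest T − uv containing x which contain x. -/
open SimpleGraph Finset

/-!
Let `uv` be an edge of the tree and `a`, `b` the numbers of subtrees containing `u`, resp. `v`, in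
the component of `u`, resp. `v`, of `T - uv`. A subtree through `u` either avoids `v`, and then lies
in the component of `u`, or is the union of a subtree through `u` and one through `v` on the two
sides; hence `F(u) = a (b + 1)`, symmetrically `F(v) = b (a + 1)`, and `F(v) ≤ F(u) ↔ b ≤ a`. So the
condition says that `F` does not increase from `u` to its neighbours. Computing with the three
components of `T - tv - vw` shows that once `F` does not increase along an edge `tv`, it does not
increase along any further edge `vw`, `w ≠ t`; so `F` does not increase along any path leaving `u`.
-/

namespace SimpleGraph

variable {V : Type*} {G : SimpleGraph V}

lemma induce_deleteEdges_of_not_mem {s : Set V} {x y : V} (h : x ∉ s ∨ y ∉ s) :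
    (G.deleteEdges {s(x, y)}).induce s = G.induce s := by
  ext ⟨a, ha⟩ ⟨b, hb⟩
  simp only [comap_adj, Function.Embedding.subtype_apply, deleteEdges_adj,
    Set.mem_singleton_iff, and_iff_left_iff_imp]
  rintro - hab
  rcases Sym2.eq_iff.mp hab with ⟨rfl, rfl⟩ | ⟨rfl, rfl⟩ <;> tauto

lemma Connected.induce_mono {G' : SimpleGraph V} (hle : G ≤ G') {s : Set V}
    (h : (G.induce s).Connected) : (G'.induce s).Connected :=
  h.mono fun _ _ hab => hle hab

lemma Connected.reachable_of_induce {s : Set V} (h : (G.induce s).Connected) {x y : V}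
    (hx : x ∈ s) (hy : y ∈ s) : G.Reachable x y :=
  (h.preconnected ⟨x, hx⟩ ⟨y, hy⟩).map (Embedding.induce s).toHom

lemma Connected.exists_isPath_of_induce {s : Set V} (h : (G.induce s).Connected) {x y : V}
    (hx : x ∈ s) (hy : y ∈ s) : ∃ p : G.Walk x y, p.IsPath ∧ ∀ z ∈ p.support, z ∈ s := by
  obtain ⟨p, hp⟩ := (h.preconnected ⟨x, hx⟩ ⟨y, hy⟩).exists_isPath
  refine ⟨p.map (Embedding.induce s).toHom, hp.map (Embedding.induce (G := G) s).injective, ?_⟩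
  intro z hz
  replace hz : z ∈ p.support.map (Embedding.induce (G := G) s).toHom := by
    rw [← Walk.support_map]; exact hz
  obtain ⟨z, -, rfl⟩ := List.mem_map.mp hz
  exact z.2

section Bridge

variable {u v : V}

lemma IsBridge.reachable_deleteEdges_or (hb : G.IsBridge s(u, v)) {x : V}
    (hx : G.Reachable u x) :
    (G.deleteEdges {s(u, v)}).Reachable u x ∨ (G.deleteEdges {s(u, v)}).Reachable v x := by
  refine or_iff_not_imp_right.mpr fun hvx => ?_
  obtain ⟨p, hp⟩ := hx.exists_isPath
  exact ⟨p.toDeleteEdges _ fun e he hmem => (hp.isTrail.not_mem_edges_of_not_reachable hb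
    fun h => hvx h.symm) (Set.mem_singleton_iff.mp hmem ▸ he)⟩

lemma IsBridge.connected_induce_reachable (hb : G.IsBridge s(u, v)) {s : Set V}
    (hs : (G.induce s).Connected) (hu : u ∈ s) :
    ((G.deleteEdges {s(u, v)}).induce
      {x | x ∈ s ∧ (G.deleteEdges {s(u, v)}).Reachable u x}).Connected := by
  classical
  set G' := G.deleteEdges {s(u, v)}
  refine induce_connected_of_patches u ⟨hu, .rfl⟩ fun {x} ⟨hx, hux⟩ => ?_
  obtain ⟨p, hp, hps⟩ := hs.exists_isPath_of_induce hu hx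
  have hvx : ¬ G'.Reachable x v := fun hxv => hb (hux.trans hxv)
  let q : G'.Walk u x := p.toDeleteEdges _ fun e he hmem =>
    hp.isTrail.not_mem_edges_of_not_reachable hb hvx (Set.mem_singleton_iff.mp hmem ▸ he)
  refine ⟨{z | z ∈ q.support}, fun z hz => ⟨?_, ⟨q.takeUntil z hz⟩⟩, q.start_mem_support,
    q.end_mem_support, q.connected_induce_support.preconnected _ _⟩
  exact hps z (by rwa [Walk.support_transfer] at hz)

lemma IsTree.isBridge (hT : G.IsTree) (huv : G.Adj u v) : G.IsBridge s(u, v) :=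
  isAcyclic_iff_forall_adj_isBridge.mp hT.isAcyclic huv

end Bridge

section Count

variable [Fintype V]

open Classical in
noncomputable def subtreesContaining (G : SimpleGraph V) (x : V) : Finset (Finset V) :=
  {A | x ∈ A ∧ (G.induce (A : Set V)).Connected}

lemma mem_subtreesContaining {x : V} {A : Finset V} :
    A ∈ G.subtreesContaining x ↔ x ∈ A ∧ (G.induce (A : Set V)).Connected := by
  simp [subtreesContaining]

lemma subtreeCount_eq_card_subtreesContaining (G : SimpleGraph V) (x : V) :
    subtreeCount G x = #(G.subtreesContaining x) := by
  classical
  rw [subtreeCount, Nat.card_eq_fintype_card, Fintype.card_subtype]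
  rfl

lemma subtreeCount_pos (G : SimpleGraph V) (x : V) : 0 < subtreeCount G x := by
  classical
  rw [subtreeCount_eq_card_subtreesContaining, card_pos]
  refine ⟨{x}, mem_subtreesContaining.mpr ⟨mem_singleton_self x, ?_⟩⟩
  rw [coe_singleton]
  exact ⟨.of_subsingleton⟩

lemma subtreeCount_deleteEdges_of_not_reachable {x p q : V} (h : ¬ G.Reachable x p) :
    subtreeCount (G.deleteEdges {s(p, q)}) x = subtreeCount G x := by
  simp only [subtreeCount_eq_card_subtreesContaining]
  congr 1
  ext A
  simp only [mem_subtreesContaining, and_congr_right_iff]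
  intro hx
  constructor
  · intro hc
    have hp : p ∉ A := fun hp => h ((hc.reachable_of_induce hx hp).mono (deleteEdges_le _))
    rwa [induce_deleteEdges_of_not_mem (.inl hp)] at hc
  · intro hc
    have hp : p ∉ A := fun hp => h (hc.reachable_of_induce hx hp)
    rwa [induce_deleteEdges_of_not_mem (.inl hp)]

namespace IsBridge

variable {u v : V}

lemma filter_not_mem_subtreesContaining [DecidableEq V] (hb : G.IsBridge s(u, v)) :
    (G.subtreesContaining u).filter (v ∉ ·) = (G.deleteEdges {s(u, v)}).subtreesContaining u := by
  ext A
  simp only [mem_filter, mem_subtreesContaining, and_assoc]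
  refine and_congr_right fun hu => ⟨fun ⟨hc, hv⟩ => ?_, fun hc => ?_⟩
  · rwa [induce_deleteEdges_of_not_mem (.inr hv)]
  · have hv : v ∉ A := fun hv => hb (hc.reachable_of_induce hu hv)
    rw [induce_deleteEdges_of_not_mem (.inr hv)] at hc
    exact ⟨hc, hv⟩

lemma card_filter_mem_subtreesContaining [DecidableEq V] (hb : G.IsBridge s(u, v))
    (huv : G.Adj u v) :
    #((G.subtreesContaining u).filter (v ∈ ·)) =
      #((G.deleteEdges {s(u, v)}).subtreesContaining u) *
        #((G.deleteEdges {s(u, v)}).subtreesContaining v) := by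
  classical
  set G' := G.deleteEdges {s(u, v)}
  have hb' : G.IsBridge s(v, u) := Sym2.eq_swap (a := u) ▸ hb
  have hle : G' ≤ G := deleteEdges_le _
  have hsep : ∀ x, G'.Reachable u x → ¬ G'.Reachable v x := fun x hux hvx =>
    hb (hux.trans hvx.symm)
  rw [← card_product]
  refine card_bij' (fun A _ => (A.filter (G'.Reachable u ·), A.filter (G'.Reachable v ·)))
    (fun BC _ => BC.1 ∪ BC.2) ?_ ?_ ?_ ?_
  · intro A hA
    simp only [mem_filter, mem_subtreesContaining] at hA
    obtain ⟨⟨hu, hc⟩, hv⟩ := hA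
    have hcv := hb'.connected_induce_reachable hc hv
    rw [Sym2.eq_swap] at hcv
    simp only [mem_product, mem_subtreesContaining, mem_filter]
    rw [coe_filter, coe_filter]
    exact ⟨⟨⟨hu, .rfl⟩, hb.connected_induce_reachable hc hu⟩, ⟨hv, .rfl⟩, hcv⟩
  · rintro ⟨B, C⟩ hBC
    simp only [mem_product, mem_subtreesContaining] at hBC
    obtain ⟨⟨hu, hB⟩, hv, hC⟩ := hBC
    simp only [mem_filter, mem_subtreesContaining]
    rw [coe_union]
    exact ⟨⟨mem_union_left _ hu, connected_induce_union (hB.induce_mono hle).preconnected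
      (hC.induce_mono hle).preconnected hu hv huv⟩, mem_union_right _ hv⟩
  · intro A hA
    simp only [mem_filter, mem_subtreesContaining] at hA
    obtain ⟨⟨hu, hc⟩, -⟩ := hA
    rw [← filter_or, filter_true_of_mem]
    exact fun x hx => hb.reachable_deleteEdges_or (hc.reachable_of_induce hu hx)
  · rintro ⟨B, C⟩ hBC
    simp only [mem_product, mem_subtreesContaining] at hBC
    obtain ⟨⟨hu, hB⟩, hv, hC⟩ := hBC
    have hBu : ∀ x ∈ B, G'.Reachable u x := fun x hx => hB.reachable_of_induce hu hx
    have hCv : ∀ x ∈ C, G'.Reachable v x := fun x hx => hC.reachable_of_induce hv hx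
    simp only [filter_union, filter_true_of_mem hBu, filter_true_of_mem hCv,
      filter_false_of_mem fun x hx => hsep x (hBu x hx),
      filter_false_of_mem fun x hx hux => hsep x hux (hCv x hx), union_empty, empty_union]

lemma subtreeCount_eq_mul (hb : G.IsBridge s(u, v)) (huv : G.Adj u v) :
    subtreeCount G u =
      subtreeCount (G.deleteEdges {s(u, v)}) u *
        (subtreeCount (G.deleteEdges {s(u, v)}) v + 1) := by
  classical
  simp only [subtreeCount_eq_card_subtreesContaining]
  rw [← card_filter_add_card_filter_not (v ∈ ·), hb.card_filter_mem_subtreesContaining huv,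
    hb.filter_not_mem_subtreesContaining, mul_add_one]

lemma subtreeCount_le_iff (hb : G.IsBridge s(u, v)) (huv : G.Adj u v) :
    subtreeCount G v ≤ subtreeCount G u ↔
      subtreeCount (G.deleteEdges {s(u, v)}) v ≤ subtreeCount (G.deleteEdges {s(u, v)}) u := by
  have hb' : G.IsBridge s(v, u) := Sym2.eq_swap (a := u) ▸ hb
  rw [hb.subtreeCount_eq_mul huv, hb'.subtreeCount_eq_mul huv.symm, Sym2.eq_swap, mul_add_one,
    mul_add_one, mul_comm, add_le_add_iff_left]

end IsBridge

namespace IsTree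

/-- With `a`, `m`, `b` the numbers of subtrees through `t`, `v`, `w` after deleting `tv` and `vw`,
the hypothesis reads `m (b + 1) ≤ a` and the conclusion `b ≤ m (a + 1)`; as `m ≥ 1`,
`b < m (b + 1) ≤ a < m (a + 1)`. -/
lemma subtreeCount_le_of_adj_of_adj (hT : G.IsTree) {t v w : V} (htv : G.Adj t v)
    (hvw : G.Adj v w) (hwt : w ≠ t) (h : subtreeCount G v ≤ subtreeCount G t) :
    subtreeCount G w ≤ subtreeCount G v := by
  rw [(hT.isBridge htv).subtreeCount_le_iff htv] at h
  rw [(hT.isBridge hvw).subtreeCount_le_iff hvw]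
  set G₁ := G.deleteEdges {s(t, v)}
  set G₂ := G.deleteEdges {s(v, w)}
  set D := G.deleteEdges {s(t, v), s(v, w)}
  have hD₁ : G₁.deleteEdges {s(v, w)} = D := by
    rw [deleteEdges_deleteEdges, Set.singleton_union]
  have hD₂ : G₂.deleteEdges {s(v, t)} = D := by
    rw [deleteEdges_deleteEdges, Set.singleton_union, Set.pair_comm, Sym2.eq_swap]
  have hvw₁ : G₁.Adj v w := by
    simp only [G₁, deleteEdges_adj, Set.mem_singleton_iff, Sym2.eq_iff]
    exact ⟨hvw, by rintro (⟨rfl, -⟩ | ⟨-, rfl⟩); exacts [htv.ne rfl, hwt rfl]⟩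
  have hvt₂ : G₂.Adj v t := by
    simp only [G₂, deleteEdges_adj, Set.mem_singleton_iff, Sym2.eq_iff]
    exact ⟨htv.symm, by rintro (⟨-, rfl⟩ | ⟨rfl, -⟩); exacts [hwt rfl, hvw.ne rfl]⟩
  have hv₁ : subtreeCount G₁ v = subtreeCount D v * (subtreeCount D w + 1) := by
    rw [← hD₁]
    exact ((hT.isBridge hvw).anti (deleteEdges_le _)).subtreeCount_eq_mul hvw₁
  have ht₁ : subtreeCount G₁ t = subtreeCount D t := by
    rw [← hD₁, subtreeCount_deleteEdges_of_not_reachable (hT.isBridge htv)]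
  have hv₂ : subtreeCount G₂ v = subtreeCount D v * (subtreeCount D t + 1) := by
    rw [← hD₂]
    exact ((hT.isBridge htv.symm).anti (deleteEdges_le _)).subtreeCount_eq_mul hvt₂
  have hw₂ : subtreeCount G₂ w = subtreeCount D w := by
    rw [← hD₂, subtreeCount_deleteEdges_of_not_reachable fun h => hT.isBridge hvw h.symm]
  have hm := D.subtreeCount_pos v
  rw [hv₁, ht₁] at h
  rw [hv₂, hw₂]
  nlinarith

lemma subtreeCount_le_of_isPath (hT : G.IsTree) {t v y : V} (htv : G.Adj t v) (p : G.Walk v y)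
    (hp : (Walk.cons htv p).IsPath) (h : subtreeCount G v ≤ subtreeCount G t) :
    subtreeCount G y ≤ subtreeCount G v := by
  induction p generalizing t with
  | nil => exact le_rfl
  | @cons v w y hvw q ih =>
    have hwt : w ≠ t := by
      rintro rfl
      exact ((Walk.cons_isPath_iff _ _).mp hp).2 (by simp)
    have hw := hT.subtreeCount_le_of_adj_of_adj htv hvw hwt h
    exact (ih hvw ((Walk.cons_isPath_iff _ _).mp hp).1 hw).trans hw

end IsTree

end Count

end SimpleGraph

/-- subtree core characterization. -/
theorem mem_core_iff {V : Type*} [Fintype V] (G : SimpleGraph V)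
    (hT : G.IsTree) (u : V) :
    u ∈ core G ↔ ∀ v, G.Adj u v →
      subtreeCount (G.deleteEdges {s(u,v)}) v ≤
        subtreeCount (G.deleteEdges {s(u,v)}) u := by
  have hnbr := fun v (huv : G.Adj u v) => (hT.isBridge huv).subtreeCount_le_iff huv
  refine ⟨fun hu v huv => (hnbr v huv).mp (hu v), fun h y => ?_⟩
  obtain ⟨p, hp⟩ := hT.connected.preconnected.exists_isPath u y
  cases p with
  | nil => exact le_rfl
  | cons huv q =>
    have hv := (hnbr _ huv).mpr (h _ huv)
    exact (hT.subtreeCount_le_of_isPath huv q hp hv).trans hv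
end

section
/- If n = 4k+3, then a tree T on n vertices attains d(C(T), CT(T)) = k if T is the (2k+2)-comet of order n. -/
open SimpleGraph Finset

/-- The `r`-comet of order `n`: a path on vertices `0, …, r-1`
with `n - r` pendant vertices attached to the end vertex `0`. -/
def comet (n r : ℕ) : SimpleGraph (Fin n) :=
  SimpleGraph.fromRel (fun a b =>
    (a.val + 1 = b.val ∧ b.val < r) ∨ (a.val = 0 ∧ r ≤ b.val))

/-!
Distances in the comet are explicit: along the path they are differences of indices, and a pendant
vertex lies one step beyond vertex `0`. For `r = 2k + 2` the eccentricity `max (j + 1) (2k + 1 - j)`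
of path vertex `j` is minimised only at `j = k`, and pendant vertices are worse, so `C(T) = {k}`.
Moving from vertex `0` to path vertex `j` raises the total distance by `j (n - 2r + 1 + j)`,
which is `j² > 0` when `n = 2r - 1`, and moving to a pendant vertex raises it by `n - 2`; so
`CT(T) = {0}`, at distance `k` from the center.
-/

namespace SimpleGraph

variable {V : Type*} {G : SimpleGraph V}

lemma le_length_of_lipschitz {t : V} {d : V → ℕ} (h0 : d t = 0)
    (hlip : ∀ a b, G.Adj a b → d a ≤ d b + 1) {v : V} (p : G.Walk v t) : d v ≤ p.length := by
  induction p with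
  | nil => simp [h0]
  | cons h _ ih => rw [Walk.length_cons]; exact (hlip _ _ h).trans (by omega)

lemma exists_walk_length_of_descent {t : V} {d : V → ℕ} (h0 : d t = 0)
    (hdesc : ∀ v, v ≠ t → ∃ w, G.Adj v w ∧ d w + 1 = d v) (v : V) :
    ∃ p : G.Walk v t, p.length = d v := by
  induction hm : d v using Nat.strong_induction_on generalizing v with
  | _ m ih =>
    by_cases hvt : v = t
    · subst hvt; exact ⟨Walk.nil, by simp [← hm, h0]⟩
    · obtain ⟨w, hadj, hw⟩ := hdesc v hvt
      obtain ⟨p, hp⟩ := ih (d w) (by omega) w rfl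
      exact ⟨Walk.cons hadj p, by rw [Walk.length_cons]; omega⟩

lemma dist_eq_of_lipschitz_of_descent {t : V} {d : V → ℕ} (h0 : d t = 0)
    (hlip : ∀ a b, G.Adj a b → d a ≤ d b + 1)
    (hdesc : ∀ v, v ≠ t → ∃ w, G.Adj v w ∧ d w + 1 = d v) (v : V) :
    G.dist v t = d v := by
  obtain ⟨p, hp⟩ := exists_walk_length_of_descent h0 hdesc v
  obtain ⟨q, hq⟩ := Reachable.exists_walk_length_eq_dist ⟨p⟩
  exact le_antisymm (hp ▸ dist_le p) (hq ▸ le_length_of_lipschitz h0 hlip q)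

end SimpleGraph

lemma setOf_forall_le_eq_singleton {V α : Type*} [LinearOrder α] {f : V → α} {c : V}
    (h : ∀ v, v ≠ c → f c < f v) : {v | ∀ u, f v ≤ f u} = {c} := by
  ext v
  simp only [Set.mem_ofPred_eq, Set.mem_singleton_iff]
  constructor
  · intro hv
    by_contra hvc
    exact (hv c).not_gt (h v hvc)
  · rintro rfl u
    rcases eq_or_ne u v with rfl | hu
    · exact le_rfl
    · exact (h u hu).le

lemma setDist_singleton {V : Type*} (G : SimpleGraph V) (x y : V) :
    setDist G {x} {y} = G.dist x y := by
  have : {n | ∃ u ∈ ({x} : Set V), ∃ v ∈ ({y} : Set V), G.dist u v = n} = {G.dist x y} := by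
    ext; simp [eq_comm]
  rw [setDist, this, csInf_singleton]

lemma sum_range_dist_self (j : ℕ) : ∑ i ∈ range j, Nat.dist j i = ∑ i ∈ range j, i + j := by
  calc ∑ i ∈ range j, Nat.dist j i = ∑ i ∈ range j, ((j - 1 - i) + 1) :=
        sum_congr rfl fun i hi => by rw [Nat.dist.eq_1]; have := mem_range.mp hi; omega
    _ = ∑ i ∈ range j, (i + 1) := sum_range_reflect (fun i => i + 1) j
    _ = ∑ i ∈ range j, i + j := by rw [sum_add_distrib, sum_const, card_range, smul_eq_mul, mul_one]

lemma sum_range_dist_add_mul {j r : ℕ} (h : j ≤ r) :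
    ∑ i ∈ range r, Nat.dist j i + r * j = ∑ i ∈ range r, i + j * (j + 1) := by
  induction r, h using Nat.le_induction with
  | base => rw [sum_range_dist_self]; ring
  | succ r hjr ih =>
    have hd : Nat.dist j r + j = r := by rw [Nat.dist_eq_sub_of_le hjr]; omega
    rw [sum_range_succ, sum_range_succ]
    linarith

lemma dist_le_ecc {V : Type*} [Fintype V] (G : SimpleGraph V) (v u : V) : G.dist v u ≤ ecc G v :=
  le_sup (f := fun u => G.dist v u) (mem_univ u)

lemma ecc_le_of_forall_dist_le {V : Type*} [Fintype V] {G : SimpleGraph V} {v : V} {e : ℕ}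
    (h : ∀ u, G.dist v u ≤ e) : ecc G v ≤ e :=
  Finset.sup_le fun u _ => h u

/-- Distances in `comet n r`: vertices `a, b < r` lie on the path, the others hang off `0`. -/
def cometDist (r a b : ℕ) : ℕ :=
  if a < r then (if b < r then Nat.dist a b else a + 1)
  else if b < r then b + 1 else if a = b then 0 else 2

section Comet

variable {n r : ℕ}

lemma comet_adj_iff (hr : 0 < r) {a b : Fin n} :
    (comet n r).Adj a b ↔ (a.val + 1 = b.val ∧ b.val < r) ∨ (b.val + 1 = a.val ∧ a.val < r) ∨
      (a.val = 0 ∧ r ≤ b.val) ∨ (b.val = 0 ∧ r ≤ a.val) := by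
  rw [comet, fromRel_adj, ← Fin.val_ne_iff]
  omega

lemma comet_dist (hr : 0 < r) (a b : Fin n) : (comet n r).dist a b = cometDist r a b := by
  refine dist_eq_of_lipschitz_of_descent (d := fun v : Fin n => cometDist r v b)
    (by simp only [cometDist, Nat.dist_self]; split_ifs <;> rfl) ?_ ?_ a
  · intro x y hxy
    rw [comet_adj_iff hr] at hxy
    simp only [cometDist, Nat.dist.eq_1]
    split_ifs <;> omega
  · intro v hv
    rw [← Fin.val_ne_iff] at hv
    have hb := b.isLt
    -- the neighbour of `v` one step closer to `b`
    refine ⟨⟨if r ≤ v.val then 0 else if v.val < b.val ∧ b.val < r then v.val + 1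
      else if v.val = 0 then b.val else v.val - 1, by split_ifs <;> omega⟩, ?_, ?_⟩
    · rw [comet_adj_iff hr]; simp only; split_ifs <;> omega
    · simp only [cometDist, Nat.dist.eq_1]; split_ifs <;> omega

lemma center_comet {m : ℕ} (hn : 2 * m + 2 < n) :
    _root_.center (comet n (2 * m + 2)) = {⟨m, by omega⟩} := by
  refine setOf_forall_le_eq_singleton fun v hv => ?_
  replace hv : v.val ≠ m := fun h => hv (Fin.ext h)
  have hecc : ecc (comet n (2 * m + 2)) ⟨m, by omega⟩ ≤ m + 1 :=
    ecc_le_of_forall_dist_le fun u => by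
      rw [comet_dist (by omega)]; simp only [cometDist, Nat.dist.eq_1]; split_ifs <;> omega
  -- a pendant vertex or the far end of the path
  obtain ⟨far, hfar⟩ : ∃ far : Fin n, m + 1 < (comet n (2 * m + 2)).dist v far := by
    simp only [comet_dist (show 0 < 2 * m + 2 by omega), cometDist, Nat.dist.eq_1]
    by_cases hvm : m < v.val ∧ v.val < 2 * m + 2
    · exact ⟨⟨2 * m + 2, hn⟩, by simp only; split_ifs <;> omega⟩
    · exact ⟨⟨2 * m + 1, by omega⟩, by simp only; split_ifs <;> omega⟩
  exact hecc.trans_lt (hfar.trans_le (dist_le_ecc _ v far))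

lemma totalDist_comet (hr : 0 < r) (hrn : r ≤ n) (v : Fin n) :
    totalDist (comet n r) v =
      ∑ i ∈ range r, cometDist r v i + ∑ i ∈ Ico r n, cometDist r v i := by
  rw [totalDist, sum_range_add_sum_Ico _ hrn, ← Fin.sum_univ_eq_sum_range]
  simp only [comet_dist hr]

lemma totalDist_comet_of_lt (hr : 0 < r) (hrn : r ≤ n) {v : Fin n} (hv : v.val < r) :
    totalDist (comet n r) v = ∑ i ∈ range r, Nat.dist v i + (n - r) * (v + 1) := by
  rw [totalDist_comet hr hrn]
  congr 1
  · exact sum_congr rfl fun i hi => by simp [cometDist, hv, mem_range.mp hi]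
  · rw [sum_congr rfl (g := fun _ => (v : ℕ) + 1) fun i hi => by
        simp [cometDist, hv, (mem_Ico.mp hi).1.not_gt], sum_const, Nat.card_Ico, smul_eq_mul]

lemma totalDist_comet_of_le (hr : 0 < r) {v : Fin n} (hv : r ≤ v.val) :
    totalDist (comet n r) v = ∑ i ∈ range r, (i + 1) + 2 * (n - r - 1) := by
  have hvn := v.isLt
  rw [totalDist_comet hr (by omega)]
  congr 1
  · exact sum_congr rfl fun i hi => by simp [cometDist, hv.not_gt, mem_range.mp hi]
  · have hmem : v.val ∈ Ico r n := mem_Ico.2 ⟨hv, hvn⟩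
    have hpendant : ∀ i ∈ (Ico r n).erase v, cometDist r v i = 2 := fun i hi => by
      simp [cometDist, hv.not_gt, (mem_Ico.mp (mem_of_mem_erase hi)).1.not_gt,
        Ne.symm (ne_of_mem_erase hi)]
    rw [← sum_erase_add _ _ hmem, sum_congr rfl hpendant, sum_const, card_erase_of_mem hmem,
      Nat.card_Ico, smul_eq_mul]
    simp only [cometDist, hv.not_gt, ↓reduceIte, add_zero]
    omega

lemma centroid_comet (hr : 0 < r) (hn : 2 * r ≤ n + 1) (h3 : 2 < n) :
    centroid (comet n r) = {⟨0, by omega⟩} := by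
  refine setOf_forall_le_eq_singleton fun v hv => ?_
  replace hv : v.val ≠ 0 := fun h => hv (Fin.ext h)
  rw [totalDist_comet_of_lt hr (by omega) (v := ⟨0, _⟩) hr]
  simp only [Nat.dist_zero_left, zero_add, mul_one]
  rcases lt_or_ge v.val r with hvr | hvr
  · rw [totalDist_comet_of_lt hr (by omega) hvr]
    have hsum := sum_range_dist_add_mul hvr.le
    obtain ⟨p, rfl⟩ : ∃ p, n = r + p := ⟨n - r, by omega⟩
    rw [Nat.add_sub_cancel_left]
    have hrv : r * v ≤ (p + 1) * v := Nat.mul_le_mul_right _ (by omega)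
    nlinarith [Nat.pos_of_ne_zero hv]
  · rw [totalDist_comet_of_le hr hvr, sum_add_distrib, sum_const, card_range, smul_eq_mul]
    have := v.isLt
    omega

end Comet

/-- for `n = 4k+3`, the `(2k+2)`-comet of order `n` attains
`d(C(T), CT(T)) = k`. -/
theorem comet_center_centroid_dist (k n : ℕ) (hn : n = 4 * k + 3) :
    setDist (comet n (2 * k + 2)) (_root_.center (comet n (2 * k + 2)))
      (centroid (comet n (2 * k + 2))) = k := by
  subst hn
  rw [center_comet (by omega), centroid_comet (by omega) (by omega) (by omega), setDist_singleton,
    comet_dist (by omega)]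
  simp [cometDist, show k < 2 * k + 2 by omega, Nat.dist_zero_right]
end

section
/- Let T be a rooted tree with root r of degree ρ ≤ k−2 and n ≥ k+1 vertices and maximum degree at most k, where some child u of r has a child v. Then the tree T' = T − uv + rv (rooted at r) has strictly more root-containing subtrees than T, and still has maximum degree at most k. -/
open SimpleGraph Finset

/-!
Every subtree of `T` containing `r` stays connected in `T'`, because the deleted edge `uv` is
bypassed by the path `u - r - v`; and `{r, v}` is a new subtree containing `r`, since in a tree the
two neighbours `r` and `v` of `u` are not adjacent. Degrees change only at `r`, which gains one
neighbour and has room for it as `ρ ≤ k - 2`, and at `v`, which trades `u` for `r`.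
-/

namespace SimpleGraph

variable {V : Type*} {G H : SimpleGraph V}

lemma Reachable.of_forall_adj_reachable (h : ∀ a b, G.Adj a b → H.Reachable a b) {a b : V}
    (hab : G.Reachable a b) : H.Reachable a b := by
  rw [reachable_iff_reflTransGen] at hab ⊢
  exact Relation.reflTransGen_closed
    (fun x y hxy => (reachable_iff_reflTransGen x y).1 (h x y hxy)) a b hab

lemma Connected.of_forall_adj_reachable (hG : G.Connected)
    (h : ∀ a b, G.Adj a b → H.Reachable a b) : H.Connected :=
  (connected_iff H).2 ⟨fun a b => (hG.preconnected a b).of_forall_adj_reachable h, hG.nonempty⟩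

lemma adj_of_induce_pair_connected {a b : V} (hab : a ≠ b) (h : (G.induce {a, b}).Connected) :
    G.Adj a b := by
  obtain ⟨p⟩ := h.preconnected ⟨a, by simp⟩ ⟨b, by simp⟩
  have hne : ¬p.Nil := Walk.not_nil_of_ne (by simpa using hab)
  have hadj : G.Adj a p.snd := Walk.adj_snd hne
  rcases p.snd.2 with hsnd | hsnd
  · exact (G.irrefl (hsnd ▸ hadj)).elim
  · exact hsnd ▸ hadj

lemma IsAcyclic.not_adj_of_adj_of_adj (hG : G.IsAcyclic) {r u v : V} (hru : G.Adj r u)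
    (huv : G.Adj u v) : ¬G.Adj r v := fun hrv =>
  hG.dist_ne_of_adj huv hru.reachable <| by
    rw [dist_eq_one_iff_adj.2 hru, dist_eq_one_iff_adj.2 hrv]

end SimpleGraph

section ShiftUp

variable {V : Type*} {G H : SimpleGraph V} {r u v : V}

lemma subtreeCount_lt_of_connected_imp [Fintype V]
    (hGH : ∀ A : Finset V, r ∈ A → (G.induce (A : Set V)).Connected →
      (H.induce (A : Set V)).Connected)
    {B : Finset V} (hrB : r ∈ B) (hG : ¬(G.induce (B : Set V)).Connected)
    (hH : (H.induce (B : Set V)).Connected) :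
    subtreeCount G r < subtreeCount H r := by
  have as_ncard (K : SimpleGraph V) : subtreeCount K r =
      {A : Finset V | r ∈ A ∧ (K.induce (A : Set V)).Connected}.ncard :=
    rfl
  rw [as_ncard, as_ncard]
  exact Set.ncard_lt_ncard ⟨fun A hA => ⟨hA.1, hGH A hA.1 hA.2⟩,
    fun hsub => hG (hsub ⟨hrB, hH⟩).2⟩ (Set.toFinite _)

lemma induce_connected_deleteEdges_sup_edge (hru : G.Adj r u) (hvr : v ≠ r) {s : Set V}
    (hrs : r ∈ s) (hs : (G.induce s).Connected) :
    ((G.deleteEdges {s(u, v)} ⊔ edge r v).induce s).Connected := by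
  set G' := G.deleteEdges {s(u, v)} ⊔ edge r v
  have hur : G'.Adj u r := Or.inl (deleteEdges_adj.2 ⟨hru.symm, by simp [hvr.symm, hru.ne]⟩)
  have hrv : G'.Adj r v := Or.inr ((adj_edge r v).2 ⟨rfl, hvr.symm⟩)
  have to_r : ∀ x : s, (x : V) = u ∨ (x : V) = v → (G'.induce s).Reachable x ⟨r, hrs⟩ := by
    rintro x (hx | hx)
    · exact Adj.reachable (show G'.Adj x r from hx ▸ hur)
    · exact Adj.reachable (show G'.Adj x r from hx ▸ hrv.symm)
  refine hs.of_forall_adj_reachable fun a b hab => ?_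
  by_cases he : s((a : V), b) = s(u, v)
  · have ha : (a : V) = u ∨ (a : V) = v := Sym2.mem_iff.1 (he ▸ Sym2.mem_mk_left _ _)
    have hb : (b : V) = u ∨ (b : V) = v := Sym2.mem_iff.1 (he ▸ Sym2.mem_mk_right _ _)
    exact (to_r a ha).trans (to_r b hb).symm
  · exact Adj.reachable (Or.inl (deleteEdges_adj.2 ⟨hab, he⟩) : G'.Adj a b)

lemma ncard_neighborSet_deleteEdges_sup_edge_le [Finite V] {k : ℕ} (huv : G.Adj u v)
    (hr : (G.neighborSet r).ncard < k) (hmax : ∀ w, (G.neighborSet w).ncard ≤ k) (w : V) :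
    ((G.deleteEdges {s(u, v)} ⊔ edge r v).neighborSet w).ncard ≤ k := by
  set G' := G.deleteEdges {s(u, v)} ⊔ edge r v
  by_cases hwr : w = r
  · subst hwr
    have hsub : G'.neighborSet w ⊆ insert v (G.neighborSet w) := by
      intro x hx
      simp only [G', neighborSet_sup, Set.mem_union, mem_neighborSet, deleteEdges_adj, edge_adj,
        Set.mem_singleton_iff, Set.mem_insert_iff, Sym2.eq_iff] at hx ⊢
      tauto
    calc _ ≤ (insert v (G.neighborSet w)).ncard := Set.ncard_le_ncard hsub (Set.toFinite _)
      _ ≤ (G.neighborSet w).ncard + 1 := Set.ncard_insert_le _ _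
      _ ≤ k := hr
  by_cases hwv : w = v
  · subst hwv
    have hsub : G'.neighborSet w ⊆ insert r (G.neighborSet w \ {u}) := by
      intro x hx
      simp only [G', neighborSet_sup, Set.mem_union, mem_neighborSet, deleteEdges_adj, edge_adj,
        Set.mem_singleton_iff, Set.mem_insert_iff, Set.mem_sdiff, Sym2.eq_iff] at hx ⊢
      tauto
    calc _ ≤ (insert r (G.neighborSet w \ {u})).ncard := Set.ncard_le_ncard hsub (Set.toFinite _)
      _ ≤ (G.neighborSet w \ {u}).ncard + 1 := Set.ncard_insert_le _ _
      _ = (G.neighborSet w).ncard := Set.ncard_sdiff_singleton_add_one huv.symm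
      _ ≤ k := hmax w
  have hsub : G'.neighborSet w ⊆ G.neighborSet w := by
    intro x hx
    simp only [G', neighborSet_sup, Set.mem_union, mem_neighborSet, deleteEdges_adj, edge_adj,
      Set.mem_singleton_iff, Sym2.eq_iff] at hx
    tauto
  exact (Set.ncard_le_ncard hsub (Set.toFinite _)).trans (hmax w)

end ShiftUp

theorem shift_up_increases_subtreeCount_general {V : Type*} [Fintype V] (G : SimpleGraph V)
    (hT : G.IsTree) (r u v : V) (k : ℕ)
    (hρ : (G.neighborSet r).ncard ≤ k - 2)
    (hmax : ∀ w, (G.neighborSet w).ncard ≤ k)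
    (hru : G.Adj r u) (huv : G.Adj u v) (hvr : v ≠ r) :
    subtreeCount G r <
      subtreeCount (G.deleteEdges {s(u,v)} ⊔ SimpleGraph.fromEdgeSet {s(r,v)}) r ∧
    ∀ w, (((G.deleteEdges {s(u,v)} ⊔ SimpleGraph.fromEdgeSet {s(r,v)})).neighborSet w).ncard
      ≤ k := by
  classical
  have hrv : ¬G.Adj r v := hT.isAcyclic.not_adj_of_adj_of_adj hru huv
  have hrv' : (G.deleteEdges {s(u, v)} ⊔ edge r v).Adj r v := Or.inr ((adj_edge r v).2 ⟨rfl, hvr.symm⟩)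
  have hk : 0 < k := (Set.ncard_pos (Set.toFinite _)).2 ⟨u, huv.symm⟩ |>.trans_le (hmax v)
  refine ⟨subtreeCount_lt_of_connected_imp (B := {r, v})
    (fun A hrA => induce_connected_deleteEdges_sup_edge hru hvr hrA) (by simp) ?_ ?_,
    ncard_neighborSet_deleteEdges_sup_edge_le huv (by omega) hmax⟩
  · rw [coe_pair]
    exact mt (adj_of_induce_pair_connected hvr.symm) hrv
  · rw [coe_pair]
    exact induce_pair_connected_of_adj hrv'

/-- moving a grandchild of the root up to the root strictly increases
the number of root-containing subtrees, keeping maximum degree at most `k`. -/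
theorem shift_up_increases_subtreeCount {V : Type*} [Fintype V] (G : SimpleGraph V)
    (hT : G.IsTree) (r u v : V) (k n : ℕ) (hn : n = Fintype.card V) (hnk : k + 1 ≤ n)
    (hρ : (G.neighborSet r).ncard ≤ k - 2)
    (hmax : ∀ w, (G.neighborSet w).ncard ≤ k)
    (hru : G.Adj r u) (huv : G.Adj u v) (hvr : v ≠ r) :
    subtreeCount G r <
      subtreeCount (G.deleteEdges {s(u,v)} ⊔ SimpleGraph.fromEdgeSet {s(r,v)}) r ∧
    ∀ w, (((G.deleteEdges {s(u,v)} ⊔ SimpleGraph.fromEdgeSet {s(r,v)})).neighborSet w).ncard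
      ≤ k :=
  shift_up_increases_subtreeCount_general G hT r u v k hρ hmax hru huv hvr
end

section
/- For f ∈ {0,1,...,h−1}, the f-split rooted at w_1 together with an extra vertex ρ adjacent to w_1 has exactly s_h(f) = h + f² + f + 1 subtrees containing ρ. -/
open SimpleGraph Finset

/-- The `f`-split together with an extra root `ρ`: vertex `0` is `ρ`,
vertices `1, …, h` form the path `w_1, …, w_h`, vertices `h+1, …, h+f` form the
path `u_1, …, u_f`, and `u_1` is joined to `w_{h-f}`. -/
def splitWithRoot (h f : ℕ) : SimpleGraph (Fin (h + f + 1)) :=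
  SimpleGraph.fromRel (fun a b =>
    (a.val + 1 = b.val ∧ b.val ≤ h) ∨ (a.val + 1 = b.val ∧ h + 2 ≤ b.val) ∨
    (a.val = h - f ∧ b.val = h + 1))

/-! With `ρ = 0`, every other vertex `v` is adjacent to a parent with a smaller number, and
these are all the edges. A vertex set containing `ρ` is therefore connected exactly when it is
closed under taking parents: if it is connected and contains `v`, a walk from `v` to `ρ` inside
it must leave the vertices below `v`, and the only way out is through the parent of `v`.
The parent-closed sets are `{ρ, w_1, …, w_a, u_1, …, u_b}` with `a ≤ h`, `b ≤ f` and
`h - f ≤ a` whenever `b ≥ 1`, giving `(h + 1) + (f + 1) f` of them. -/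

namespace SimpleGraph

variable {V : Type*} {G : SimpleGraph V}

lemma Walk.mem_support_of_unique_exit {S : Set V} {u : V}
    (hS : ∀ a b, G.Adj a b → a ∈ S → b ∉ S → b = u) :
    ∀ {x y : V} (W : G.Walk x y), x ∈ S → y ∉ S → u ∈ W.support
  | _, _, .nil, hx, hy => absurd hx hy
  | _, _, .cons (v := b) hadj W, hx, hy => by
    by_cases hb : b ∈ S
    · exact List.mem_cons_of_mem _ (W.mem_support_of_unique_exit hS hb hy)
    · rw [Walk.support_cons, ← hS _ _ hadj hx hb]
      exact List.mem_cons_of_mem _ W.start_mem_support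

lemma mem_of_induce_connected_of_unique_exit {A S : Set V} {u x y : V}
    (hA : (G.induce A).Connected) (hS : ∀ a b, G.Adj a b → a ∈ S → b ∉ S → b = u)
    (hxA : x ∈ A) (hyA : y ∈ A) (hx : x ∈ S) (hy : y ∉ S) : u ∈ A := by
  obtain ⟨W⟩ := hA.preconnected ⟨x, hxA⟩ ⟨y, hyA⟩
  have hu := (W.map (Embedding.induce A).toHom).mem_support_of_unique_exit hS hx hy
  rw [Walk.support_map] at hu
  obtain ⟨t, -, rfl⟩ := List.mem_map.mp hu
  exact t.2

lemma induce_connected_of_exists_adj_rank_lt {A : Set V} {r : V} (hr : r ∈ A) (rank : V → ℕ)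
    (hA : ∀ v ∈ A, v ≠ r → ∃ w ∈ A, G.Adj w v ∧ rank w < rank v) :
    (G.induce A).Connected := by
  have hreach : ∀ n, ∀ v (hv : v ∈ A), rank v = n → (G.induce A).Reachable ⟨r, hr⟩ ⟨v, hv⟩ := by
    intro n
    induction n using Nat.strong_induction_on with
    | _ n ih =>
      intro v hv hvn
      by_cases hvr : v = r
      · subst hvr; rfl
      obtain ⟨w, hw, hwv, hlt⟩ := hA v hv hvr
      exact (ih _ (hvn ▸ hlt) w hw rfl).trans (Adj.reachable (G := G.induce A) hwv)
  rw [connected_iff]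
  exact ⟨fun a b => (hreach _ a.1 a.2 rfl).symm.trans (hreach _ b.1 b.2 rfl), ⟨⟨r, hr⟩⟩⟩

end SimpleGraph

namespace SplitWithRoot

variable {h f : ℕ}

/-- The neighbour of `v` towards `ρ = 0`; `ρ` is its own parent. -/
def parent (h f : ℕ) (v : Fin (h + f + 1)) : Fin (h + f + 1) :=
  ⟨if v.val = h + 1 then h - f else v.val - 1, by split <;> omega⟩

lemma parent_val (v : Fin (h + f + 1)) :
    (parent h f v).val = if v.val = h + 1 then h - f else v.val - 1 := rfl

lemma adj_iff (a b : Fin (h + f + 1)) :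
    (splitWithRoot h f).Adj a b ↔ (b ≠ 0 ∧ a = parent h f b) ∨ (a ≠ 0 ∧ b = parent h f a) := by
  simp only [splitWithRoot, fromRel_adj, ne_eq, Fin.ext_iff, parent_val, Fin.val_zero]
  split_ifs <;> omega

lemma parent_adj {v : Fin (h + f + 1)} (hv : v ≠ 0) : (splitWithRoot h f).Adj (parent h f v) v :=
  (adj_iff _ _).2 (Or.inl ⟨hv, rfl⟩)

lemma parent_lt {v : Fin (h + f + 1)} (hv : v ≠ 0) : parent h f v < v := by
  rw [Fin.lt_def, parent_val]
  rw [ne_eq, Fin.ext_iff, Fin.val_zero] at hv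
  split_ifs <;> omega

/-- The vertices below `v`, read off the numbering: all of `[v, h + f]` when `v ≤ h - f`
(the branch `u_1, …, u_f` hangs below `w_{h-f}`), and otherwise the rest of the path of `v`. -/
def below (h f : ℕ) (v : Fin (h + f + 1)) : Set (Fin (h + f + 1)) :=
  {x | v ≤ x ∧ (h - f < v.val → v.val ≤ h → x.val ≤ h)}

lemma eq_parent_of_adj_below {v a b : Fin (h + f + 1)}
    (hab : (splitWithRoot h f).Adj a b) (ha : a ∈ below h f v) (hb : b ∉ below h f v) :
    b = parent h f v := by
  simp only [below, Set.mem_ofPred_eq, Fin.le_def, not_and, Classical.not_imp] at ha hb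
  rw [adj_iff] at hab
  simp only [ne_eq, Fin.ext_iff, Fin.val_zero, parent_val] at hab ⊢
  split_ifs at hab ⊢ <;> omega

variable {A : Finset (Fin (h + f + 1))}

lemma parent_mem_of_connected (h0 : 0 ∈ A)
    (hA : ((splitWithRoot h f).induce (A : Set (Fin (h + f + 1)))).Connected)
    {v : Fin (h + f + 1)} (hv : v ∈ A) (hv0 : v ≠ 0) : parent h f v ∈ A := by
  refine mem_of_induce_connected_of_unique_exit (S := below h f v) hA
    (fun _ _ => eq_parent_of_adj_below) hv h0 ⟨le_rfl, fun _ hvh => hvh⟩ ?_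
  rw [ne_eq, Fin.ext_iff, Fin.val_zero] at hv0
  simp only [below, Set.mem_ofPred_eq, Fin.le_def, Fin.val_zero]
  omega

lemma connected_iff_parent_mem (h0 : 0 ∈ A) :
    ((splitWithRoot h f).induce (A : Set (Fin (h + f + 1)))).Connected ↔
      ∀ v ∈ A, v ≠ 0 → parent h f v ∈ A :=
  ⟨fun hA _ hv hv0 => parent_mem_of_connected h0 hA hv hv0, fun hA =>
    induce_connected_of_exists_adj_rank_lt h0 Fin.val fun v hv hv0 =>
      ⟨_, hA v hv hv0, parent_adj hv0, parent_lt hv0⟩⟩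

/-- The subtree with vertices `ρ, w_1, …, w_a` and `u_1, …, u_b`. -/
def subtree (h f : ℕ) (p : ℕ × ℕ) : Finset (Fin (h + f + 1)) :=
  {x | x.val ≤ p.1 ∨ (h + 1 ≤ x.val ∧ x.val ≤ h + p.2)}

def shapes (h f : ℕ) : Finset (ℕ × ℕ) :=
  range (h + 1) ×ˢ {0} ∪ Icc (h - f) h ×ˢ Icc 1 f

lemma mem_shapes {p : ℕ × ℕ} : p ∈ shapes h f ↔ p.1 ≤ h ∧ p.2 ≤ f ∧ (1 ≤ p.2 → h - f ≤ p.1) := by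
  simp only [shapes, mem_union, mem_product, mem_range, mem_singleton, mem_Icc]
  omega

lemma card_shapes (hf : f ≤ h) : #(shapes h f) = h + f ^ 2 + f + 1 := by
  rw [shapes, card_union_of_disjoint, card_product, card_product, card_range, card_singleton,
    Nat.card_Icc, Nat.card_Icc, show h + 1 - (h - f) = f + 1 by omega, Nat.add_sub_cancel]
  · ring
  · simp only [Finset.disjoint_left, mem_product, mem_singleton, mem_Icc]
    omega

lemma subtree_injOn : Set.InjOn (subtree h f) (shapes h f) := by
  rintro ⟨a, b⟩ hab ⟨a', b'⟩ hab' heq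
  rw [mem_coe, mem_shapes] at hab hab'
  have hmem (x : Fin (h + f + 1)) : x ∈ subtree h f (a, b) ↔ x ∈ subtree h f (a', b') := by
    rw [heq]
  simp only [subtree, mem_filter, mem_univ, true_and] at hmem
  have h1 := hmem ⟨a, by omega⟩
  have h2 := hmem ⟨a', by omega⟩
  have h3 := hmem ⟨h + b, by omega⟩
  have h4 := hmem ⟨h + b', by omega⟩
  simp only at h1 h2 h3 h4
  simp only [Prod.mk.injEq]
  omega

lemma parent_mem_subtree {p : ℕ × ℕ} (hp : p ∈ shapes h f) {v : Fin (h + f + 1)}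
    (hv : v ∈ subtree h f p) : parent h f v ∈ subtree h f p := by
  rw [mem_shapes] at hp
  simp only [subtree, mem_filter, mem_univ, true_and, parent_val] at hv ⊢
  split_ifs <;> omega

lemma mem_of_le_of_parent_mem (hA : ∀ v ∈ A, v ≠ 0 → parent h f v ∈ A)
    {x y : Fin (h + f + 1)} (hy : y ∈ A) (hxy : x ≤ y) (hpath : y.val ≤ h ∨ h + 1 ≤ x.val) :
    x ∈ A := by
  obtain ⟨k, hk⟩ := Nat.exists_eq_add_of_le (Fin.le_def.1 hxy)
  induction k generalizing y with
  | zero => rwa [Fin.ext hk] at hy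
  | succ k ih =>
    have hy0 : y ≠ 0 := by rw [ne_eq, Fin.ext_iff, Fin.val_zero]; omega
    have hpy : (parent h f y).val = x.val + k := by rw [parent_val]; split_ifs <;> omega
    exact ih (hA y hy hy0) (Fin.le_def.2 (by omega)) (by omega) hpy

lemma exists_shape_of_parent_mem (h0 : 0 ∈ A) (hA : ∀ v ∈ A, v ≠ 0 → parent h f v ∈ A) :
    ∃ p ∈ shapes h f, subtree h f p = A := by
  obtain ⟨y, hy, hy_max⟩ := exists_max_image (A.filter (·.val ≤ h)) Fin.val ⟨0, by simp [h0]⟩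
  rw [mem_filter] at hy
  obtain ⟨z, hz, hzb⟩ := exists_mem_eq_sup A ⟨0, h0⟩ (fun x => x.val - h)
  set b := A.sup (fun x => x.val - h)
  have hb_max (x) (hx : x ∈ A) : x.val - h ≤ b := le_sup (f := fun x => x.val - h) hx
  have hbranch (x : Fin (h + f + 1)) (hx : h + 1 ≤ x.val ∧ x.val ≤ h + b) : x ∈ A :=
    mem_of_le_of_parent_mem hA hz (Fin.le_def.2 (by omega)) (Or.inr hx.1)
  refine ⟨(y.val, b), mem_shapes.2 ⟨hy.2, by omega, fun hb => ?_⟩, ?_⟩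
  · have hfork := hA _ (hbranch ⟨h + 1, by omega⟩ ⟨le_rfl, by simp only; omega⟩)
      (by simp [Fin.ext_iff])
    have key := hy_max _ (mem_filter.2 ⟨hfork, by rw [parent_val]; simp⟩)
    rwa [parent_val, if_pos rfl] at key
  · ext x
    simp only [subtree, mem_filter, mem_univ, true_and]
    refine ⟨?_, fun hx => ?_⟩
    · rintro (hx | hx)
      · exact mem_of_le_of_parent_mem hA hy.1 (Fin.le_def.2 hx) (Or.inl hy.2)
      · exact hbranch x hx
    · by_cases hxh : x.val ≤ h
      · exact Or.inl (hy_max x (mem_filter.2 ⟨hx, hxh⟩))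
      · have := hb_max x hx
        omega

lemma zero_mem_and_connected_iff :
    (0 ∈ A ∧ ((splitWithRoot h f).induce (A : Set (Fin (h + f + 1)))).Connected) ↔
      ∃ p ∈ shapes h f, subtree h f p = A := by
  constructor
  · rintro ⟨h0, hA⟩
    exact exists_shape_of_parent_mem h0 ((connected_iff_parent_mem h0).1 hA)
  · rintro ⟨p, hp, rfl⟩
    have h0 : 0 ∈ subtree h f p := by simp [subtree]
    exact ⟨h0, (connected_iff_parent_mem h0).2 fun _ hv _ => parent_mem_subtree hp hv⟩

end SplitWithRoot

open SplitWithRoot in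
theorem splitWithRoot_subtreeCount_general (h f : ℕ) (hf : f < h) :
    subtreeCount (splitWithRoot h f) 0 = h + f ^ 2 + f + 1 := by
  calc subtreeCount (splitWithRoot h f) 0
      = Nat.card ((shapes h f).image (subtree h f)) :=
        Nat.card_congr <| Equiv.subtypeEquivRight fun A => by
          rw [mem_image, zero_mem_and_connected_iff]
    _ = h + f ^ 2 + f + 1 := by
      rw [Nat.card_eq_finsetCard, card_image_of_injOn subtree_injOn, card_shapes hf.le]

/-- the `f`-split with root `ρ` attached has exactly
`s_h(f) = h + f² + f + 1` subtrees containing `ρ`. -/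
theorem splitWithRoot_subtreeCount (h f : ℕ) (h1 : 1 ≤ h) (hf : f < h) :
    subtreeCount (splitWithRoot h f) 0 = h + f ^ 2 + f + 1 :=
  splitWithRoot_subtreeCount_general h f hf
end

section
/- For integers h, k_i, k_j with 1 ≤ k_i ≤ k_j ≤ h−1 and k_i(1+k_j) > h+1, one has s_h(k_i)·s_h(k_j) − s_h(k_i−1)·s_h(k_j+1) = −2(k_i − k_j − 1)(k_i + k_i·k_j − h − 1) > 0, where s_h(f) = h + f² + f + 1. -/
/-- `s_h(f) = h + f² + f + 1`. -/
def sh (h f : ℤ) : ℤ := h + f ^ 2 + f + 1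

/-- for `1 ≤ kᵢ ≤ kⱼ ≤ h−1` with `kᵢ(1+kⱼ) > h+1`,
`s_h(kᵢ)s_h(kⱼ) − s_h(kᵢ−1)s_h(kⱼ+1) = −2(kᵢ−kⱼ−1)(kᵢ+kᵢkⱼ−h−1) > 0`. -/
theorem split_rebalance (h ki kj : ℤ) (h1 : 1 ≤ ki) (h2 : ki ≤ kj) (h3 : kj ≤ h - 1)
    (h4 : h + 1 < ki * (1 + kj)) :
    sh h ki * sh h kj - sh h (ki - 1) * sh h (kj + 1) =
      -2 * (ki - kj - 1) * (ki + ki * kj - h - 1) ∧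
    0 < -2 * (ki - kj - 1) * (ki + ki * kj - h - 1) := by
  constructor
  · simp only [sh]; ring
  · have : 0 < kj + 1 - ki := by linarith
    have : 0 < ki + ki * kj - h - 1 := by nlinarith
    nlinarith
end
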